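/- arXiv:0907.2450 — 4 statements merged into one kernel-verified Lean document; each statement's English description precedes it below -/
import Mathlib

section
/- The contraction map φ_k : Λ^k(C^{2n}) → Λ^{k-2}(C^{2n}) defined by φ_k(v_1 ∧ ... ∧ v_k) = Σ_{i<j} Ω(v_i,v_j)(-1)^{i+j-1} v_1 ∧ ... ∧ v̂_i ∧ ... ∧ v̂_j ∧ ... ∧ v_k, where Ω is the standard symplectic form on C^{2n}, is a surjective linear map for 2 ≤ k ≤ n. -/
/-!
Write `φ = Σ_l ι_{e_l̄^*} ι_{e_l^*}` as a sum of double contractions and `ω = Σ_l e_l ∧ e_l̄` for the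
symplectic bivector. Since each contraction is an antiderivation, `φ(ω ∧ x) - ω ∧ φ(x)` is
`n x - Σ_i e_i ∧ ι_{e_i^*} x`, which by Euler's identity is `(n - m) x` on `Λ^m`. Iterating,
`φ(ω^{j+1} ∧ y) = ω^{j+1} ∧ φ(y) + (j+1)(n-m-j) ω^j ∧ y`. For `y ∈ Λ^k` with `k + 2j + 2 ≤ n` the
coefficient is nonzero, so `ω^j ∧ y ∈ φ(Λ^{k+2j+2})` as soon as `ω^{j+1} ∧ φ(y)` is, which is the same
claim in degree `k - 2`; strong induction on `k` and `j = 0` give surjectivity.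
-/

noncomputable section

/-- `ℂ^{2n}`, with basis indexed in the order `e_1, …, e_n, e_{n̄}, …, e_{1̄}`. -/
abbrev Vsp (n : ℕ) := Fin (2 * n) → ℂ

/-- The standard symplectic form `Ω = Σ_i e_i^* ∧ e_{ī}^*` on `ℂ^{2n}`
(the basis vector `e_{ī}` sits at position `2n-1-i`, in `0`-based indexing). -/
def OmegaForm (n : ℕ) (v w : Vsp n) : ℂ :=
  ∑ i : Fin n,
    (v ⟨(i : ℕ), by have := i.isLt; omega⟩ * w ⟨2 * n - 1 - (i : ℕ), by have := i.isLt; omega⟩ -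
      v ⟨2 * n - 1 - (i : ℕ), by have := i.isLt; omega⟩ * w ⟨(i : ℕ), by have := i.isLt; omega⟩)

/-- The family `v` with its `i`-th and `j`-th entries (`i < j`) omitted. -/
def omit2 {α : Type*} {k : ℕ} (v : Fin (k + 2) → α) (i j : Fin (k + 2)) (hij : i < j) :
    Fin k → α :=
  fun m =>
    v (j.succAbove
        ((⟨(i : ℕ), by have h1 := Fin.lt_def.mp hij; have h2 := j.isLt; omega⟩ :
          Fin (k + 1)).succAbove m))

theorem omit2_of_lt_succAbove {α : Type*} {k : ℕ} (v : Fin (k + 2) → α) (q : Fin (k + 2))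
    (p : Fin (k + 1)) (h : q < q.succAbove p) :
    omit2 v q (q.succAbove p) h = p.removeNth (q.removeNth v) := by
  ext m
  simp only [omit2, Fin.removeNth, ← Fin.succAbove_succAbove_succAbove_predAbove q p m]
  congr 3
  ext
  simp [Fin.predAbove_of_le_castSucc p q ((Fin.lt_succAbove_iff_le_castSucc q p).1 h)]

theorem omit2_of_succAbove_lt {α : Type*} {k : ℕ} (v : Fin (k + 2) → α) (q : Fin (k + 2))
    (p : Fin (k + 1)) (h : q.succAbove p < q) :
    omit2 v (q.succAbove p) q h = p.removeNth (q.removeNth v) := by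
  ext m
  simp only [omit2, Fin.removeNth, Fin.succAbove_of_castSucc_lt q p
    ((Fin.succAbove_lt_iff_castSucc_lt q p).1 h)]
  rfl

theorem Fin.sum_sum_succAbove_eq_sum_lt {W : Type*} [AddCommMonoid W] {m : ℕ}
    (H : Fin (m + 1) → Fin (m + 1) → W) (hH : ∀ q, H q q = 0) :
    ∑ q, ∑ p : Fin m, H q (q.succAbove p) = ∑ i, ∑ j, if i < j then H i j + H j i else 0 := by
  have hsplit (q r : Fin (m + 1)) :
      H q r = (if q < r then H q r else 0) + (if r < q then H q r else 0) := by
    rcases lt_trichotomy q r with h | rfl | h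
    · simp [h, h.not_gt]
    · simp [hH]
    · simp [h, h.not_gt]
  calc ∑ q, ∑ p : Fin m, H q (q.succAbove p) = ∑ q, ∑ r, H q r := by
        refine Finset.sum_congr rfl fun q _ => ?_
        rw [Fin.sum_univ_succAbove (H q) q, hH, zero_add]
    _ = (∑ q, ∑ r, if q < r then H q r else 0) + ∑ q, ∑ r, if r < q then H q r else 0 := by
        simp only [← Finset.sum_add_distrib, ← hsplit]
    _ = _ := by
        rw [Finset.sum_comm (f := fun q r => if r < q then H q r else 0)]
        simp only [← Finset.sum_add_distrib, ite_add_ite, add_zero]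

def Module.Basis.symplecticForm {R : Type*} [CommRing R] {M : Type*} [AddCommGroup M]
    [Module R M] {κ : Type*} [Fintype κ] (b : Module.Basis (κ ⊕ κ) R M) (v w : M) : R :=
  ∑ l, (b.coord (.inl l) v * b.coord (.inr l) w - b.coord (.inr l) v * b.coord (.inl l) w)

namespace ExteriorAlgebra

open CliffordAlgebra

variable {R : Type*} [CommRing R] {M : Type*} [AddCommGroup M] [Module R M]

local infixl:70 " ⌋ " => contractLeft (R := R) (M := M) (Q := 0)

theorem contractLeft_ιMulti (d : Module.Dual R M) {m : ℕ} (v : Fin (m + 1) → M) :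
    d ⌋ ιMulti R (m + 1) v =
      ∑ p : Fin (m + 1), ((-1 : R) ^ (p : ℕ) * d (v p)) • ιMulti R m (p.removeNth v) := by
  induction m with
  | zero => simp [ιMulti_succ_apply, ιMulti_zero_apply, Algebra.algebraMap_eq_smul_one]
  | succ m ih =>
    have hsucc (p : Fin (m + 1)) : ιMulti R (m + 1) (p.succ.removeNth v) =
        ι R (v 0) * ιMulti R m (p.removeNth (Matrix.vecTail v)) := by
      rw [ιMulti_succ_apply]
      congr 2
      ext i; simp [Fin.removeNth, Matrix.vecTail, Fin.succ_succAbove_succ]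
    conv_rhs => rw [Fin.sum_univ_succ]
    rw [ιMulti_succ_apply, contractLeft_ι_mul, ih, Finset.mul_sum]
    simp only [hsucc, Fin.val_zero, pow_zero, one_mul, Fin.val_succ, pow_succ, Fin.removeNth_zero,
      mul_smul_comm, sub_eq_add_neg, ← Finset.sum_neg_distrib]
    congr 1
    refine Finset.sum_congr rfl fun p _ => ?_
    simp only [Matrix.vecTail, Function.comp_apply]
    module

theorem contractLeft_mem_exteriorPower (d : Module.Dual R M) {m : ℕ} {x : ExteriorAlgebra R M}
    (hx : x ∈ ⋀[R]^(m + 1) M) : d ⌋ x ∈ ⋀[R]^m M := by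
  rw [← ιMulti_span_fixedDegree] at hx
  refine Submodule.span_le (p := (⋀[R]^m M).comap (contractLeft d)) |>.2 ?_ hx
  rintro _ ⟨v, rfl⟩
  rw [SetLike.mem_coe, Submodule.mem_comap, contractLeft_ιMulti]
  exact Submodule.sum_mem _ fun p _ => Submodule.smul_mem _ _ (exteriorPower.ιMulti R m _).2

theorem contractLeft_eq_zero_of_mem_exteriorPower_zero (d : Module.Dual R M)
    {x : ExteriorAlgebra R M} (hx : x ∈ ⋀[R]^0 M) : d ⌋ x = 0 := by
  rw [exteriorPower, pow_zero, Submodule.mem_one] at hx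
  obtain ⟨r, rfl⟩ := hx
  exact contractLeft_algebraMap (Q := 0) _ _

theorem sum_ι_mul_contractLeft_coord {κ : Type*} [Fintype κ] (b : Module.Basis κ R M) {m : ℕ}
    {x : ExteriorAlgebra R M} (hx : x ∈ ⋀[R]^m M) :
    ∑ i, ι R (b i) * (b.coord i ⌋ x) = (m : R) • x := by
  have hι_mul (v : M) (y : ExteriorAlgebra R M) :
      ∑ i, ι R (b i) * (b.coord i ⌋ (ι R v * y)) =
        ι R v * y + ι R v * ∑ i, ι R (b i) * (b.coord i ⌋ y) := by
    have hswap (i : κ) : ι R (b i) * (ι R v * (b.coord i ⌋ y)) =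
        -(ι R v * (ι R (b i) * (b.coord i ⌋ y))) := by
      rw [← mul_assoc, ← mul_assoc, ← neg_mul, eq_neg_of_add_eq_zero_left (ι_add_mul_swap _ _)]
    simp only [contractLeft_ι_mul, mul_sub, mul_smul_comm, hswap, sub_neg_eq_add,
      Finset.sum_add_distrib, Finset.mul_sum]
    congr 1
    simp only [← smul_mul_assoc, ← Finset.sum_mul, ← map_smul, ← map_sum, Module.Basis.coord_apply,
      b.sum_repr]
  rw [← ιMulti_span_fixedDegree] at hx
  induction hx using Submodule.span_induction with
  | mem y hy =>
    obtain ⟨v, rfl⟩ := hy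
    induction m with
    | zero => simp [ιMulti_zero_apply]
    | succ m ih =>
      rw [ιMulti_succ_apply, hι_mul, ih, mul_smul_comm]
      push_cast
      module
  | zero => simp
  | add y z _ _ hy hz => simp only [map_add, mul_add, Finset.sum_add_distrib, hy, hz, smul_add]
  | smul c y _ hy => simp only [map_smul, mul_smul_comm, ← Finset.smul_sum, hy, smul_comm c]

theorem contractLeft_contractLeft_ιMulti (d d' : Module.Dual R M) {k : ℕ}
    (v : Fin (k + 2) → M) :
    d' ⌋ (d ⌋ ιMulti R (k + 2) v) =
      ∑ i : Fin (k + 2), ∑ j : Fin (k + 2),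
        if hij : i < j then
          ((-1 : R) ^ ((i : ℕ) + (j : ℕ) + 1) * (d (v i) * d' (v j) - d (v j) * d' (v i))) •
            ιMulti R k (omit2 v i j hij)
        else 0 := by
  -- `H q r` is the term of the double expansion in which `v q` is contracted first, then `v r`.
  set H : Fin (k + 2) → Fin (k + 2) → ExteriorAlgebra R M := fun q r =>
    if h : q < r then ((-1 : R) ^ ((q : ℕ) + (r : ℕ) + 1) * (d (v q) * d' (v r))) •
      ιMulti R k (omit2 v q r h)
    else if h : r < q then ((-1 : R) ^ ((q : ℕ) + (r : ℕ)) * (d (v q) * d' (v r))) •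
      ιMulti R k (omit2 v r q h)
    else 0 with hH
  have hterm (q : Fin (k + 2)) (p : Fin (k + 1)) :
      ((-1 : R) ^ (q : ℕ) * d (v q)) • (((-1 : R) ^ (p : ℕ) * d' (q.removeNth v p)) •
        ιMulti R k (p.removeNth (q.removeNth v))) = H q (q.succAbove p) := by
    rcases lt_or_gt_of_ne (Fin.succAbove_ne q p).symm with h | h
    · have hval : (q.succAbove p : ℕ) = p + 1 := by
        rw [Fin.succAbove_of_le_castSucc q p ((Fin.lt_succAbove_iff_le_castSucc q p).1 h)]; rfl
      simp only [hH, dif_pos h, ← omit2_of_lt_succAbove v q p h, smul_smul, Fin.removeNth_apply]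
      rw [hval]
      congr 1
      ring
    · have hval : (q.succAbove p : ℕ) = p := by
        rw [Fin.succAbove_of_castSucc_lt q p ((Fin.succAbove_lt_iff_castSucc_lt q p).1 h)]; rfl
      simp only [hH, dif_neg h.not_gt, dif_pos h, ← omit2_of_succAbove_lt v q p h, smul_smul,
        Fin.removeNth_apply]
      rw [hval]
      congr 1
      ring
  calc d' ⌋ (d ⌋ ιMulti R (k + 2) v) = ∑ q, ∑ p : Fin (k + 1), H q (q.succAbove p) := by
        simp only [contractLeft_ιMulti, map_sum, map_smul, Finset.smul_sum, hterm]
    _ = _ := by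
        rw [Fin.sum_sum_succAbove_eq_sum_lt H fun q => by simp [hH]]
        refine Finset.sum_congr rfl fun i _ => Finset.sum_congr rfl fun j _ => ?_
        split_ifs with hij
        · simp only [hH, dif_pos hij, dif_neg hij.not_gt]
          rw [← add_smul]
          congr 1
          ring
        · rfl

theorem contractLeft_contractLeft_ι_mul_ι_mul (d d' : Module.Dual R M) (a c : M)
    (x : ExteriorAlgebra R M) :
    d' ⌋ (d ⌋ (ι R a * (ι R c * x))) =
      (d a * d' c - d c * d' a) • x - d a • (ι R c * (d' ⌋ x)) + d c • (ι R a * (d' ⌋ x))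
        + d' a • (ι R c * (d ⌋ x)) - d' c • (ι R a * (d ⌋ x)) + ι R a * (ι R c * (d' ⌋ (d ⌋ x))) := by
  simp only [contractLeft_ι_mul, map_sub, map_smul, smul_sub, mul_sub, mul_smul_comm, smul_smul]
  module

section Symplectic

variable {κ : Type*} [Fintype κ] (b : Module.Basis (κ ⊕ κ) R M)

def symplecticContraction : ExteriorAlgebra R M →ₗ[R] ExteriorAlgebra R M :=
  ∑ l, contractLeft (b.coord (.inr l)) ∘ₗ contractLeft (b.coord (.inl l))

def symplecticBivector : ExteriorAlgebra R M :=
  ∑ l, ι R (b (.inl l)) * ι R (b (.inr l))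

theorem symplecticContraction_apply (x : ExteriorAlgebra R M) :
    symplecticContraction b x = ∑ l, b.coord (.inr l) ⌋ (b.coord (.inl l) ⌋ x) := by
  simp [symplecticContraction]

theorem symplecticContraction_ιMulti {k : ℕ} (v : Fin (k + 2) → M) :
    symplecticContraction b (ιMulti R (k + 2) v) =
      ∑ i : Fin (k + 2), ∑ j : Fin (k + 2),
        if hij : i < j then
          ((-1 : R) ^ ((i : ℕ) + (j : ℕ) + 1) * b.symplecticForm (v i) (v j)) •
            ιMulti R k (omit2 v i j hij)
        else 0 := by
  simp only [symplecticContraction_apply, contractLeft_contractLeft_ιMulti]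
  rw [Finset.sum_comm]
  refine Finset.sum_congr rfl fun i _ => ?_
  rw [Finset.sum_comm]
  refine Finset.sum_congr rfl fun j _ => ?_
  split_ifs
  · rw [← Finset.sum_smul, Module.Basis.symplecticForm, Finset.mul_sum]
    congr 1
    refine Finset.sum_congr rfl fun l _ => ?_
    ring
  · simp

theorem symplecticContraction_mem_exteriorPower {m : ℕ} {x : ExteriorAlgebra R M}
    (hx : x ∈ ⋀[R]^(m + 2) M) : symplecticContraction b x ∈ ⋀[R]^m M := by
  rw [symplecticContraction_apply]
  exact Submodule.sum_mem _ fun l _ =>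
    contractLeft_mem_exteriorPower _ (contractLeft_mem_exteriorPower _ hx)

theorem symplecticContraction_eq_zero_of_mem_exteriorPower {m : ℕ} (hm : m < 2)
    {x : ExteriorAlgebra R M} (hx : x ∈ ⋀[R]^m M) : symplecticContraction b x = 0 := by
  rw [symplecticContraction_apply]
  refine Finset.sum_eq_zero fun l _ => ?_
  interval_cases m
  · rw [contractLeft_eq_zero_of_mem_exteriorPower_zero _ hx, map_zero]
  · exact contractLeft_eq_zero_of_mem_exteriorPower_zero _ (contractLeft_mem_exteriorPower _ hx)

theorem symplecticBivector_pow_mul_mem_exteriorPower (j : ℕ) {m : ℕ} {x : ExteriorAlgebra R M}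
    (hx : x ∈ ⋀[R]^m M) : symplecticBivector b ^ j * x ∈ ⋀[R]^(2 * j + m) M := by
  have hι (a : M) : ι R a ∈ ⋀[R]^1 M := by
    rw [exteriorPower, pow_one]; exact LinearMap.mem_range_self _ a
  have hω : symplecticBivector b ∈ ⋀[R]^2 M :=
    Submodule.sum_mem _ fun l _ => SetLike.mul_mem_graded (hι _) (hι _)
  simpa only [smul_eq_mul, mul_comm j] using
    SetLike.mul_mem_graded (SetLike.pow_mem_graded j hω) hx

theorem symplecticContraction_symplecticBivector_mul {m : ℕ} {x : ExteriorAlgebra R M}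
    (hx : x ∈ ⋀[R]^m M) :
    symplecticContraction b (symplecticBivector b * x) =
      symplecticBivector b * symplecticContraction b x + ((Fintype.card κ : R) - m) • x := by
  classical
  have hcoord (i j : κ ⊕ κ) : b.coord i (b j) = if j = i then 1 else 0 := by
    simp [Finsupp.single_apply]
  have hEuler := sum_ι_mul_contractLeft_coord b hx
  rw [Fintype.sum_sum_type] at hEuler
  simp only [symplecticBivector, symplecticContraction_apply, Finset.sum_mul, map_sum, mul_assoc,
    contractLeft_contractLeft_ι_mul_ι_mul, hcoord, reduceCtorEq, if_false, Sum.inl.injEq,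
    Sum.inr.injEq]
  simp only [mul_ite, mul_one, mul_zero, sub_zero, zero_smul, add_zero, ite_smul, one_smul,
    Finset.sum_add_distrib, Finset.sum_sub_distrib, Finset.sum_ite_eq, Finset.mem_univ, if_true,
    Finset.mul_sum, Finset.sum_const, Finset.card_univ]
  rw [sub_smul, ← hEuler, ← Nat.cast_smul_eq_nsmul R]
  abel

theorem symplecticContraction_symplecticBivector_pow_mul (j : ℕ) {m : ℕ}
    {x : ExteriorAlgebra R M} (hx : x ∈ ⋀[R]^m M) :
    symplecticContraction b (symplecticBivector b ^ (j + 1) * x) =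
      symplecticBivector b ^ (j + 1) * symplecticContraction b x +
        (((j : R) + 1) * ((Fintype.card κ : R) - m - j)) • (symplecticBivector b ^ j * x) := by
  induction j generalizing m x with
  | zero => simpa using symplecticContraction_symplecticBivector_mul b hx
  | succ j ih =>
    have hωx : symplecticBivector b * x ∈ ⋀[R]^(m + 2) M := by
      simpa [add_comm] using symplecticBivector_pow_mul_mem_exteriorPower b 1 hx
    have hpow (i : ℕ) : symplecticBivector b ^ (i + 1) * x =
        symplecticBivector b ^ i * (symplecticBivector b * x) := by
      rw [pow_succ, mul_assoc]
    rw [hpow, ih hωx, symplecticContraction_symplecticBivector_mul b hx, hpow, mul_add,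
      ← mul_assoc, ← pow_succ, mul_smul_comm, ← hpow, add_assoc, ← add_smul]
    congr 2
    push_cast
    ring

end Symplectic

section Field

variable {K : Type*} [Field K] [CharZero K] {V : Type*} [AddCommGroup V] [Module K V]
  {κ : Type*} [Fintype κ] (b : Module.Basis (κ ⊕ κ) K V)

theorem symplecticBivector_pow_mul_mem_map_symplecticContraction {k j : ℕ}
    (hk : k + 2 * j + 2 ≤ Fintype.card κ) {y : ExteriorAlgebra K V} (hy : y ∈ ⋀[K]^k V) :
    symplecticBivector b ^ j * y ∈ (⋀[K]^(k + 2 * j + 2) V).map (symplecticContraction b) := by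
  induction k using Nat.strong_induction_on generalizing j y with
  | _ k ih =>
    set φ := symplecticContraction b
    set ω := symplecticBivector b
    have hc : ((j : K) + 1) * ((Fintype.card κ : K) - k - j) ≠ 0 := by
      obtain ⟨r, hr⟩ := Nat.exists_eq_add_of_le (show k + j + 1 ≤ Fintype.card κ by omega)
      rw [hr, show ((k + j + 1 + r : ℕ) : K) - k - j = r + 1 by push_cast; ring]
      exact mul_ne_zero (Nat.cast_add_one_ne_zero j) (Nat.cast_add_one_ne_zero r)
    have himage : φ (ω ^ (j + 1) * y) ∈ (⋀[K]^(k + 2 * j + 2) V).map φ :=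
      Submodule.mem_map_of_mem (by
        convert symplecticBivector_pow_mul_mem_exteriorPower b (j + 1) hy using 2; ring)
    have hcorr : ω ^ (j + 1) * φ y ∈ (⋀[K]^(k + 2 * j + 2) V).map φ := by
      rcases lt_or_ge k 2 with hk2 | hk2
      · rw [symplecticContraction_eq_zero_of_mem_exteriorPower b hk2 hy, mul_zero]
        exact Submodule.zero_mem _
      · obtain ⟨k, rfl⟩ := Nat.exists_eq_add_of_le' hk2
        convert ih k (by omega) (j := j + 1) (by omega)
          (symplecticContraction_mem_exteriorPower b hy) using 3
        ring
    rw [← Submodule.smul_mem_iff _ hc]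
    convert Submodule.sub_mem _ himage hcorr using 1
    rw [symplecticContraction_symplecticBivector_pow_mul b j hy]
    abel

theorem surjOn_symplecticContraction {k : ℕ} (hk : k + 2 ≤ Fintype.card κ) :
    Set.SurjOn (symplecticContraction b) (⋀[K]^(k + 2) V) (⋀[K]^k V) := by
  intro y hy
  simpa using symplecticBivector_pow_mul_mem_map_symplecticContraction b (j := 0) hk hy

end Field

end ExteriorAlgebra

def darbouxEquiv (n : ℕ) : Fin n ⊕ Fin n ≃ Fin (2 * n) :=
  (Equiv.sumCongr (Equiv.refl _) Fin.revPerm).trans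
    (finSumFinEquiv.trans (finCongr (two_mul n).symm))

def darbouxBasis (n : ℕ) : Module.Basis (Fin n ⊕ Fin n) ℂ (Vsp n) :=
  (Pi.basisFun ℂ (Fin (2 * n))).reindex (darbouxEquiv n).symm

theorem omegaForm_eq_symplecticForm (n : ℕ) (v w : Vsp n) :
    OmegaForm n v w = (darbouxBasis n).symplecticForm v w := by
  have hinl (l : Fin n) : darbouxEquiv n (.inl l) = ⟨l, by omega⟩ := by
    ext; simp [darbouxEquiv]
  have hinr (l : Fin n) : darbouxEquiv n (.inr l) = ⟨2 * n - 1 - l, by omega⟩ := by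
    ext; simp [darbouxEquiv]; omega
  simp [OmegaForm, Module.Basis.symplecticForm, darbouxBasis, hinl, hinr]

open ExteriorAlgebra in
/-- The sign `(-1)^{i+j-1}` for `1`-based indices `i, j` becomes `(-1)^{i+j+1}` in `0`-based
indexing. -/
theorem symplectic_contraction_surjective (n k : ℕ) (hk : k + 2 ≤ n) :
    ∃ φ : (⋀[ℂ]^(k + 2) (Vsp n)) →ₗ[ℂ] (⋀[ℂ]^k (Vsp n)),
      (∀ (v : Fin (k + 2) → Vsp n) (x : ⋀[ℂ]^(k + 2) (Vsp n)),
          (x : ExteriorAlgebra ℂ (Vsp n)) = ιMulti ℂ (k + 2) v →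
          ((φ x : ⋀[ℂ]^k (Vsp n)) : ExteriorAlgebra ℂ (Vsp n)) =
            ∑ i : Fin (k + 2), ∑ j : Fin (k + 2),
              if hij : i < j then
                ((-1 : ℂ) ^ ((i : ℕ) + (j : ℕ) + 1) * OmegaForm n (v i) (v j)) •
                  ιMulti ℂ k (omit2 v i j hij)
              else 0) ∧
      Function.Surjective φ := by
  refine ⟨(symplecticContraction (darbouxBasis n)).restrict
    fun x hx => symplecticContraction_mem_exteriorPower _ hx, fun v x hx => ?_, ?_⟩
  · simp only [LinearMap.coe_restrict_apply, hx, symplecticContraction_ιMulti,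
      omegaForm_eq_symplecticForm]
  · rintro ⟨y, hy⟩
    obtain ⟨x, hx, hxy⟩ := surjOn_symplecticContraction (darbouxBasis n) (by simpa using hk) hy
    exact ⟨⟨x, hx⟩, Subtype.ext hxy⟩
end
end

section
/- The dimension of the kernel of the contraction map φ_k : Λ^k(C^{2n}) → Λ^{k-2}(C^{2n}) equals C(2n,k) − C(2n,k−2) for 2 ≤ k ≤ n, where C(m,r) denotes the binomial coefficient. -/
/-!
By rank–nullity it suffices to show that `φ` is surjective. Write a basis monomial of degree `k`
as its complete symplectic pairs `e_a ∧ e_ā` (`a ∈ P`) followed by its unpaired vectors `N`.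
On such a Darboux monomial `m_{P,N}` the contraction only sees the adjacent pairs, so
`φ m_{Q,N} = ∑_{a ∈ Q} m_{Q \ a, N}`. Modulo the range of `φ`, the function `z P = m_{P,N}`
therefore satisfies `∑_{a ∈ Q} z (Q \ a) = 0` for every `(#P + 1)`-set `Q` of pairs disjoint
from `N`. There are at least `2 #P + 2` such pairs, and on subsets of a set with more than `2q`
elements the map `z ↦ (Q ↦ ∑_{a ∈ Q} z (Q \ a))` from `q`-sets to `(q + 1)`-sets is injective:
this follows from the commutation relation between erasing and inserting elements, as for the
`sl₂`-action on a Boolean lattice. Hence `z = 0`, i.e. every basis monomial lies in the range.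
-/

noncomputable section

open Finset

namespace Finset

variable {α : Type*} [LinearOrder α] [Inhabited α] {s : Finset α} {t u : ℕ}

def sortedNth (s : Finset α) (t : ℕ) : α :=
  if h : t < #s then s.orderEmbOfFin rfl ⟨t, h⟩ else default

lemma sortedNth_of_lt (h : t < #s) : s.sortedNth t = s.orderEmbOfFin rfl ⟨t, h⟩ := dif_pos h

lemma sortedNth_of_le (h : #s ≤ t) : s.sortedNth t = default := dif_neg (by omega)

lemma sortedNth_mem (h : t < #s) : s.sortedNth t ∈ s := by
  rw [sortedNth_of_lt h]
  exact orderEmbOfFin_mem s rfl _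

lemma sortedNth_lt_sortedNth (htu : t < u) (hu : u < #s) : s.sortedNth t < s.sortedNth u := by
  rw [sortedNth_of_lt (htu.trans hu), sortedNth_of_lt hu]
  exact (s.orderEmbOfFin rfl).strictMono htu

lemma sortedNth_inj (ht : t < #s) (hu : u < #s) : s.sortedNth t = s.sortedNth u ↔ t = u := by
  rw [sortedNth_of_lt ht, sortedNth_of_lt hu, (s.orderEmbOfFin rfl).injective.eq_iff, Fin.mk.injEq]

lemma exists_sortedNth_eq {x : α} (hx : x ∈ s) : ∃ t < #s, s.sortedNth t = x := by
  obtain ⟨⟨t, ht⟩, rfl⟩ : x ∈ Set.range (s.orderEmbOfFin rfl) := by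
    rwa [range_orderEmbOfFin]
  exact ⟨t, ht, sortedNth_of_lt ht⟩

lemma sum_eq_sum_range_sortedNth {M : Type*} [AddCommMonoid M] (f : α → M) :
    ∑ a ∈ s, f a = ∑ t ∈ range #s, f (s.sortedNth t) := by
  refine (sum_nbij s.sortedNth (fun t ht => sortedNth_mem (mem_range.1 ht)) ?_ ?_
    (fun _ _ => rfl)).symm
  · intro t ht u hu h
    exact (sortedNth_inj (mem_range.1 ht) (mem_range.1 hu)).1 h
  · intro x hx
    obtain ⟨t, ht, rfl⟩ := exists_sortedNth_eq hx
    exact ⟨t, mem_range.2 ht, rfl⟩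

lemma sortedNth_erase [DecidableEq α] (ht : t < #s) (m : ℕ) :
    (s.erase (s.sortedNth t)).sortedNth m = s.sortedNth (if m < t then m else m + 1) := by
  have hcard : #(s.erase (s.sortedNth t)) = #s - 1 := card_erase_of_mem (sortedNth_mem ht)
  have hshift : ∀ m, m < #s - 1 → (if m < t then m else m + 1) < #s := fun m hm => by
    split_ifs <;> omega
  by_cases hm : m < #s - 1
  · have key := orderEmbOfFin_unique (s := s.erase (s.sortedNth t)) rfl
      (f := fun m => s.sortedNth (if (m : ℕ) < t then m else m + 1)) ?_ ?_
    · rw [sortedNth_of_lt (by omega)]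
      exact (congrFun key ⟨m, by omega⟩).symm
    · intro ⟨m, hm⟩
      refine mem_erase.2 ⟨fun h => ?_, sortedNth_mem (hshift m (by omega))⟩
      have := (sortedNth_inj (hshift m (by omega)) ht).1 h
      split_ifs at this <;> omega
    · intro ⟨a, ha⟩ ⟨b, hb⟩ hab
      rw [Fin.mk_lt_mk] at hab
      show s.sortedNth (if a < t then a else a + 1) < s.sortedNth (if b < t then b else b + 1)
      exact sortedNth_lt_sortedNth (by split_ifs <;> omega) (hshift b (by omega))
  · rw [sortedNth_of_le (by omega), sortedNth_of_le (by split_ifs <;> omega)]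

end Finset

namespace Finset

variable {α : Type*} [DecidableEq α] {K M : Type*} [AddCommGroup M]

def eraseSum (z : Finset α → M) (Q : Finset α) : M := ∑ b ∈ Q, z (Q.erase b)

def insertSum (F : Finset α) (z : Finset α → M) (P : Finset α) : M :=
  ∑ a ∈ F \ P, z (insert a P)

lemma insertSum_eraseSum_add {F P : Finset α} (hP : P ⊆ F) (z : Finset α → M) :
    insertSum F (eraseSum z) P + #P • z P = eraseSum (insertSum F z) P + #(F \ P) • z P := by
  have hins : insertSum F (eraseSum z) P
      = ∑ a ∈ F \ P, (z P + ∑ b ∈ P, z (insert a (P.erase b))) := by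
    refine sum_congr rfl fun a ha => ?_
    have haP : a ∉ P := (mem_sdiff.1 ha).2
    rw [eraseSum, sum_insert haP, erase_insert haP]
    congr 1
    refine sum_congr rfl fun b hb => ?_
    rw [erase_insert_of_ne (ne_of_mem_of_not_mem hb haP).symm]
  have hers : eraseSum (insertSum F z) P
      = ∑ b ∈ P, (z P + ∑ a ∈ F \ P, z (insert a (P.erase b))) := by
    refine sum_congr rfl fun b hb => ?_
    rw [insertSum, sdiff_erase (hP hb), sum_insert (fun h => (mem_sdiff.1 h).2 hb),
      insert_erase hb]
  rw [hins, hers, sum_add_distrib, sum_add_distrib, sum_const, sum_const, sum_comm]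
  abel

variable [Field K] [Module K M]

lemma eraseSum_iterate_insertSum {F : Finset α} {q : ℕ} {z : Finset α → M} (hF : 2 * q ≤ #F)
    (hz : ∀ Q ⊆ F, #Q = q + 1 → eraseSum z Q = 0) (j : ℕ) :
    ∀ P ⊆ F, #P + j = q → eraseSum ((insertSum F)^[j + 1] z) P
      = -(((j + 1) * (#F - 2 * q) + j * (j + 1) : ℕ) : K) • (insertSum F)^[j] z P := by
  induction j with
  | zero =>
    intro P hPF hP
    have hzero : insertSum F (eraseSum z) P = 0 := sum_eq_zero fun a ha => by
      obtain ⟨haF, haP⟩ := mem_sdiff.1 ha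
      exact hz _ (insert_subset haF hPF) (by rw [card_insert_of_notMem haP]; omega)
    have key := insertSum_eraseSum_add hPF z
    rw [hzero, card_sdiff_of_subset hPF, ← Nat.cast_smul_eq_nsmul K,
      ← Nat.cast_smul_eq_nsmul K] at key
    have hc : ((#F - #P : ℕ) : K) = (((0 + 1) * (#F - 2 * q) + 0 * (0 + 1) : ℕ) : K) + #P := by
      rw [show #F - #P = #P + (#F - 2 * q) by omega]
      push_cast; ring
    show eraseSum (insertSum F z) P = _
    rw [Function.iterate_zero_apply]
    linear_combination (norm := module) -key - hc • z P
  | succ j ih =>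
    intro P hPF hP
    set w := (insertSum F)^[j + 1] z
    have hstep : insertSum F (eraseSum w) P
        = -(((j + 1) * (#F - 2 * q) + j * (j + 1) : ℕ) : K) • w P := by
      rw [show w P = insertSum F ((insertSum F)^[j] z) P from
        congrFun (Function.iterate_succ_apply' _ _ _) P, insertSum, insertSum, smul_sum]
      refine sum_congr rfl fun a ha => ?_
      obtain ⟨haF, haP⟩ := mem_sdiff.1 ha
      exact ih _ (insert_subset haF hPF) (by rw [card_insert_of_notMem haP]; omega)
    have key := insertSum_eraseSum_add hPF w
    rw [hstep, card_sdiff_of_subset hPF, ← Nat.cast_smul_eq_nsmul K,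
      ← Nat.cast_smul_eq_nsmul K] at key
    have hc : (((j + 1 + 1) * (#F - 2 * q) + (j + 1) * (j + 1 + 1) : ℕ) : K)
        = ((j + 1) * (#F - 2 * q) + j * (j + 1) : ℕ) + (#F - #P : ℕ) - #P := by
      rw [show #F - #P = #P + 2 * (j + 1) + (#F - 2 * q) by omega]
      push_cast; ring
    rw [Function.iterate_succ_apply']
    linear_combination (norm := module) -key + hc • w P

theorem eq_zero_of_eraseSum_eq_zero [CharZero K] {F : Finset α} {q : ℕ} {z : Finset α → M}
    (hF : 2 * q < #F) (hz : ∀ Q ⊆ F, #Q = q + 1 → eraseSum z Q = 0) {P : Finset α}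
    (hPF : P ⊆ F) (hP : #P = q) : z P = 0 := by
  have cancel : ∀ j, ∀ P ⊆ F, #P + j = q → eraseSum ((insertSum F)^[j + 1] z) P = 0 →
      (insertSum F)^[j] z P = 0 := by
    intro j P hPF hP h
    rw [eraseSum_iterate_insertSum (K := K) hF.le hz j P hPF hP, neg_smul, neg_eq_zero] at h
    refine (smul_eq_zero.1 h).resolve_left ?_
    exact Nat.cast_ne_zero.2 <| Nat.ne_of_gt <|
      (Nat.mul_pos j.succ_pos (Nat.sub_pos_of_lt hF)).trans_le (Nat.le_add_right _ _)
  suffices ∀ p j, p + j = q → ∀ P ⊆ F, #P = p → (insertSum F)^[j] z P = 0 from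
    this q 0 rfl P hPF hP
  intro p
  induction p with
  | zero =>
    intro j hj P hPF hP
    refine cancel j P hPF (by omega) ?_
    rw [card_eq_zero.1 hP, eraseSum, sum_empty]
  | succ p ih =>
    intro j hj P hPF hP
    refine cancel j P hPF (by omega) (sum_eq_zero fun b hb => ?_)
    exact ih (j + 1) (by omega) _ ((erase_subset b P).trans hPF)
      (by rw [card_erase_of_mem hb, hP]; rfl)

end Finset

lemma Finset.sum_range_ite_even {M : Type*} [AddCommMonoid M] {q K : ℕ} (hq : 2 * q ≤ K)
    (f : ℕ → M) :
    ∑ i ∈ range K, (if i % 2 = 0 ∧ i < 2 * q then f i else 0) =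
      ∑ t ∈ range q, f (2 * t) := by
  rw [← sum_filter, ← sum_image (g := (2 * ·)) (fun _ _ _ _ h => by simp only at h; omega)]
  congr 1
  ext i
  simp only [mem_filter, mem_range, mem_image]
  constructor
  · rintro ⟨-, hi, hi'⟩
    exact ⟨i / 2, by omega, by omega⟩
  · rintro ⟨t, ht, rfl⟩
    omega

lemma Function.Injective.exists_perm_eq_comp {α β : Type*} {f g : α → β}
    (hf : Function.Injective f) (hg : Function.Injective g) (h : Set.range f = Set.range g) :
    ∃ σ : Equiv.Perm α, f = g ∘ σ :=
  ⟨(Equiv.ofInjective f hf).trans ((Equiv.setCongr h).trans (Equiv.ofInjective g hg).symm),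
    funext fun a => by simp [Equiv.apply_ofInjective_symm]⟩

lemma omit2_of_val_eq_succ {α : Type*} {k : ℕ} (v : Fin (k + 2) → α) {i j : Fin (k + 2)}
    (hij : i < j) (h : (j : ℕ) = i + 1) (w : Fin k) :
    omit2 v i j hij w = v ⟨if (w : ℕ) < i then w else w + 2, by split_ifs <;> omega⟩ := by
  unfold omit2
  congr 1
  ext
  simp only [Fin.succAbove, Fin.lt_def]
  split_ifs <;> simp only [Fin.val_castSucc, Fin.val_succ] at * <;> omega

section Darboux

variable {n : ℕ}

def darbouxIndex (a : Fin n) (i : ℕ) : Fin (2 * n) :=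
  if i % 2 = 0 then Fin.castLE (by omega) a else (Fin.castLE (by omega) a).rev

lemma darbouxIndex_mod_two (a : Fin n) (i : ℕ) : darbouxIndex a (i % 2) = darbouxIndex a i := by
  simp [darbouxIndex]

lemma rev_darbouxIndex (a : Fin n) (i : ℕ) : (darbouxIndex a i).rev = darbouxIndex a (i + 1) := by
  unfold darbouxIndex
  split_ifs <;> first | omega | simp

lemma darbouxIndex_eq_iff {a b : Fin n} {i j : ℕ} :
    darbouxIndex a i = darbouxIndex b j ↔ a = b ∧ i % 2 = j % 2 := by
  have := a.isLt; have := b.isLt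
  unfold darbouxIndex
  split_ifs <;> simp [Fin.ext_iff, Fin.val_rev] <;> omega

lemma exists_darbouxIndex_eq (x : Fin (2 * n)) : ∃ a : Fin n, ∃ i, darbouxIndex a i = x := by
  by_cases hx : (x : ℕ) < n
  · exact ⟨⟨x, hx⟩, 0, rfl⟩
  · refine ⟨⟨x.rev, by rw [Fin.val_rev]; omega⟩, 1, ?_⟩
    ext
    simp [darbouxIndex, Fin.val_rev]
    omega

lemma OmegaForm_single_of_ne_rev {p q : Fin (2 * n)} (h : q ≠ p.rev) :
    OmegaForm n (Pi.single p 1) (Pi.single q 1) = 0 := by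
  refine Finset.sum_eq_zero fun i _ => ?_
  simp only [Pi.single_apply]
  split_ifs <;> simp_all [Fin.ext_iff, Fin.val_rev] <;> omega

lemma OmegaForm_single_darbouxIndex (a : Fin n) {i : ℕ} (hi : i % 2 = 0) :
    OmegaForm n (Pi.single (darbouxIndex a i) 1) (Pi.single (darbouxIndex a (i + 1)) 1) = 1 := by
  have := a.isLt
  rw [OmegaForm, Finset.sum_eq_single a]
  · simp [darbouxIndex, hi, Nat.add_mod, Pi.single_apply, Fin.ext_iff, Fin.val_rev]
    split_ifs <;> norm_num <;> omega
  · intro b _ hb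
    have := Fin.val_ne_of_ne hb
    simp [darbouxIndex, hi, Nat.add_mod, Pi.single_apply, Fin.ext_iff, Fin.val_rev]
    split_ifs <;> norm_num <;> omega
  · simp

lemma darbouxIndex_mem_of_rev_mem {U : Finset (Fin (2 * n))} {a : Fin n} {i : ℕ}
    (h : darbouxIndex a i ∈ U) (h' : (darbouxIndex a i).rev ∈ U) (j : ℕ) :
    darbouxIndex a j ∈ U := by
  rw [rev_darbouxIndex] at h'
  rw [← darbouxIndex_mod_two] at h h' ⊢
  rcases Nat.mod_two_eq_zero_or_one i with hi | hi <;>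
    rcases Nat.mod_two_eq_zero_or_one j with hj | hj <;> simp_all [Nat.add_mod]

def freePairs (N : Finset (Fin (2 * n))) : Finset (Fin n) :=
  {a | darbouxIndex a 0 ∉ N ∧ darbouxIndex a 1 ∉ N}

lemma darbouxIndex_notMem_of_mem_freePairs {N : Finset (Fin (2 * n))} {a : Fin n}
    (ha : a ∈ freePairs N) (i : ℕ) : darbouxIndex a i ∉ N := by
  rw [freePairs, Finset.mem_filter] at ha
  rw [← darbouxIndex_mod_two]
  rcases Nat.mod_two_eq_zero_or_one i with h | h <;> simp [h, ha.2]

lemma card_sub_le_card_freePairs (N : Finset (Fin (2 * n))) : n - #N ≤ #(freePairs N) := by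
  have hcompl : #(freePairs N)ᶜ ≤ #N := by
    refine Finset.card_le_card_of_injOn
      (fun a => if darbouxIndex a 0 ∈ N then darbouxIndex a 0 else darbouxIndex a 1) ?_ ?_
    · intro a ha
      simp only [Finset.coe_compl, Set.mem_compl_iff, Finset.mem_coe, freePairs,
        Finset.mem_filter, Finset.mem_univ, true_and, not_and_or, not_not] at ha ⊢
      split_ifs with h
      exacts [h, ha.resolve_left h]
    · intro a _ b _ hab
      simp only at hab
      split_ifs at hab <;> exact (darbouxIndex_eq_iff.1 hab).1
  have := Finset.card_add_card_compl (freePairs N)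
  rw [Fintype.card_fin] at this
  omega

end Darboux

section DarbouxWord

variable {n : ℕ} [NeZero n] {P : Finset (Fin n)} {N : Finset (Fin (2 * n))}

/-- The indices of `e_{a₁} ∧ e_{ā₁} ∧ ⋯ ∧ e_{a_q} ∧ e_{ā_q}` (where `a₁ < ⋯ < a_q` enumerate `P`)
followed by the elements of `N` in increasing order; junk beyond the length `2 #P + #N`. -/
def darbouxWord (P : Finset (Fin n)) (N : Finset (Fin (2 * n))) (i : ℕ) : Fin (2 * n) :=
  if i < 2 * #P then darbouxIndex (P.sortedNth (i / 2)) i else N.sortedNth (i - 2 * #P)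

lemma darbouxWord_of_lt {i : ℕ} (hi : i < 2 * #P) :
    darbouxWord P N i = darbouxIndex (P.sortedNth (i / 2)) i := if_pos hi

lemma darbouxWord_of_le {i : ℕ} (hi : 2 * #P ≤ i) :
    darbouxWord P N i = N.sortedNth (i - 2 * #P) := if_neg (by omega)

lemma darbouxWord_erase {t : ℕ} (ht : t < #P) (w : ℕ) :
    darbouxWord (P.erase (P.sortedNth t)) N w =
      darbouxWord P N (if w < 2 * t then w else w + 2) := by
  have hcard : #(P.erase (P.sortedNth t)) = #P - 1 := card_erase_of_mem (sortedNth_mem ht)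
  by_cases hw : w < 2 * (#P - 1)
  · rw [darbouxWord_of_lt (by omega), sortedNth_erase ht]
    split_ifs with h1 h2 h2
    · rw [darbouxWord_of_lt (by omega)]
    · omega
    · omega
    · rw [darbouxWord_of_lt (by omega), ← darbouxIndex_mod_two _ (w + 2), Nat.add_mod_right,
        darbouxIndex_mod_two, show (w + 2) / 2 = w / 2 + 1 by omega]
  · rw [darbouxWord_of_le (by omega), if_neg (by omega), darbouxWord_of_le (by omega), hcard]
    congr 1
    omega

lemma darbouxWord_mem {i : ℕ} (hi : 2 * #P ≤ i) (hi' : i < 2 * #P + #N) :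
    darbouxWord P N i ∈ N := by
  rw [darbouxWord_of_le hi]
  exact sortedNth_mem (by omega)

lemma darbouxWord_injOn (hP : P ⊆ freePairs N) {i j : ℕ} (hi : i < 2 * #P + #N)
    (hj : j < 2 * #P + #N) (h : darbouxWord P N i = darbouxWord P N j) : i = j := by
  rcases lt_or_ge i (2 * #P) with hiP | hiP <;> rcases lt_or_ge j (2 * #P) with hjP | hjP
  · rw [darbouxWord_of_lt hiP, darbouxWord_of_lt hjP, darbouxIndex_eq_iff,
      sortedNth_inj (by omega) (by omega)] at h
    omega
  · rw [darbouxWord_of_lt hiP] at h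
    exact absurd (h ▸ darbouxWord_mem hjP hj)
      (darbouxIndex_notMem_of_mem_freePairs (hP (sortedNth_mem (by omega))) i)
  · rw [darbouxWord_of_lt hjP] at h
    exact absurd (h ▸ darbouxWord_mem hiP hi)
      (darbouxIndex_notMem_of_mem_freePairs (hP (sortedNth_mem (by omega))) j)
  · rw [darbouxWord_of_le hiP, darbouxWord_of_le hjP, sortedNth_inj (by omega) (by omega)] at h
    omega

lemma OmegaForm_darbouxWord (hN : ∀ x ∈ N, x.rev ∉ N) (hP : P ⊆ freePairs N) {i j : ℕ}
    (hij : i < j) (hj : j < 2 * #P + #N) :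
    OmegaForm n (Pi.single (darbouxWord P N i) 1) (Pi.single (darbouxWord P N j) 1) =
      if j = i + 1 ∧ i % 2 = 0 ∧ i < 2 * #P then 1 else 0 := by
  split_ifs with hpair
  · obtain ⟨rfl, heven, hiP⟩ := hpair
    rw [darbouxWord_of_lt hiP, darbouxWord_of_lt (by omega), show (i + 1) / 2 = i / 2 by omega]
    exact OmegaForm_single_darbouxIndex _ heven
  refine OmegaForm_single_of_ne_rev fun h => hpair ?_
  rcases lt_or_ge i (2 * #P) with hiP | hiP
  · have partner : ∀ i' < 2 * #P, i' / 2 = i / 2 → i' % 2 ≠ i % 2 →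
        darbouxWord P N i' = (darbouxWord P N i).rev := fun i' hi'P hdiv hmod => by
      rw [darbouxWord_of_lt hiP, rev_darbouxIndex, darbouxWord_of_lt hi'P, hdiv,
        ← darbouxIndex_mod_two _ (i + 1), ← darbouxIndex_mod_two _ i']
      congr 1
      omega
    rcases Nat.mod_two_eq_zero_or_one i with hi2 | hi2
    · have := darbouxWord_injOn hP hj (by omega)
        (h.trans (partner (i + 1) (by omega) (by omega) (by omega)).symm)
      omega
    · have := darbouxWord_injOn hP hj (by omega)
        (h.trans (partner (i - 1) (by omega) (by omega) (by omega)).symm)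
      omega
  · exact absurd (h ▸ darbouxWord_mem (by omega) hj) (hN _ (darbouxWord_mem hiP (by omega)))

def darbouxMonomial (P : Finset (Fin n)) (N : Finset (Fin (2 * n))) (m : ℕ) :
    ⋀[ℂ]^m (Vsp n) :=
  exteriorPower.ιMulti ℂ m fun i => Pi.single (darbouxWord P N i) 1

end DarbouxWord

section Decomposition

variable {n : ℕ} [NeZero n]

/-- The witnesses are the pairs `a` with `e_a, e_ā` both in `U`, and the elements of `U` whose
partner is not in `U`. -/
lemma exists_image_darbouxWord_eq (U : Finset (Fin (2 * n))) :
    ∃ (P : Finset (Fin n)) (N : Finset (Fin (2 * n))), (∀ x ∈ N, x.rev ∉ N) ∧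
      P ⊆ freePairs N ∧ (range (2 * #P + #N)).image (darbouxWord P N) = U := by
  set P : Finset (Fin n) := {a | darbouxIndex a 0 ∈ U ∧ darbouxIndex a 1 ∈ U}
  set N := U.filter fun x => x.rev ∉ U
  refine ⟨P, N, ?_⟩
  have hP : ∀ a ∈ P, ∀ i, darbouxIndex a i ∈ U := fun a ha i => by
    simp only [P, mem_filter, mem_univ, true_and] at ha
    exact darbouxIndex_mem_of_rev_mem ha.1 (by rw [rev_darbouxIndex]; exact ha.2) i
  refine ⟨fun x hx hx' => (mem_filter.1 hx).2 (mem_filter.1 hx').1, fun a ha => ?_, ?_⟩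
  · simp only [freePairs, N, mem_filter, mem_univ, true_and, not_and, not_not]
    exact ⟨fun _ => rev_darbouxIndex a 0 ▸ hP a ha 1,
      fun _ => rev_darbouxIndex a 1 ▸ hP a ha 2⟩
  refine Subset.antisymm (fun x hx => ?_) (fun x hx => ?_)
  · obtain ⟨i, hi, rfl⟩ := mem_image.1 hx
    rw [mem_range] at hi
    rcases lt_or_ge i (2 * #P) with hiP | hiP
    · rw [darbouxWord_of_lt hiP]
      exact hP _ (sortedNth_mem (by omega)) i
    · exact (mem_filter.1 (darbouxWord_mem hiP hi)).1
  · rw [mem_image]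
    by_cases hrev : x.rev ∈ U
    · obtain ⟨a, b, rfl⟩ := exists_darbouxIndex_eq x
      obtain ⟨t, ht, rfl⟩ := exists_sortedNth_eq (s := P) (by
        simp only [P, mem_filter, mem_univ, true_and]
        exact ⟨darbouxIndex_mem_of_rev_mem hx hrev 0, darbouxIndex_mem_of_rev_mem hx hrev 1⟩)
      refine ⟨2 * t + b % 2, mem_range.2 (by omega), ?_⟩
      rw [darbouxWord_of_lt (by omega), ← darbouxIndex_mod_two, darbouxIndex_eq_iff]
      refine ⟨?_, by omega⟩
      rw [show (2 * t + b % 2) / 2 = t by omega]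
    · have hxN : x ∈ N := mem_filter.2 ⟨hx, hrev⟩
      obtain ⟨s, hs, rfl⟩ := exists_sortedNth_eq hxN
      refine ⟨2 * #P + s, mem_range.2 (by omega), ?_⟩
      rw [darbouxWord_of_le (by omega), Nat.add_sub_cancel_left]

lemma exists_darbouxWord_comp_perm {k : ℕ} {g : Fin k → Fin (2 * n)}
    (hg : Function.Injective g) :
    ∃ (P : Finset (Fin n)) (N : Finset (Fin (2 * n))) (σ : Equiv.Perm (Fin k)),
      (∀ x ∈ N, x.rev ∉ N) ∧ P ⊆ freePairs N ∧ 2 * #P + #N = k ∧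
      g = (fun i : Fin k => darbouxWord P N i) ∘ σ := by
  classical
  obtain ⟨P, N, hN, hP, himage⟩ := exists_image_darbouxWord_eq (univ.image g)
  have hinj : Set.InjOn (darbouxWord P N) (range (2 * #P + #N)) := fun i hi j hj h =>
    darbouxWord_injOn hP (mem_range.1 hi) (mem_range.1 hj) h
  have hlen : 2 * #P + #N = k := by
    have := congrArg card himage
    rwa [card_image_of_injOn hinj, card_range, card_image_of_injective _ hg, card_univ,
      Fintype.card_fin] at this
  subst hlen
  have hrange : Set.range g = Set.range fun i : Fin (2 * #P + #N) => darbouxWord P N i := by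
    ext x
    constructor
    · rintro ⟨i, rfl⟩
      obtain ⟨j, hj, hji⟩ := mem_image.1 (himage ▸ mem_image_of_mem g (mem_univ i))
      exact ⟨⟨j, mem_range.1 hj⟩, hji⟩
    · rintro ⟨j, rfl⟩
      obtain ⟨i, -, hi⟩ := mem_image.1 (himage.symm ▸ mem_image_of_mem _ (mem_range.2 j.isLt))
      exact ⟨i, hi⟩
  obtain ⟨σ, hσ⟩ := hg.exists_perm_eq_comp
    (fun i j h => Fin.ext (hinj (mem_range.2 i.isLt) (mem_range.2 j.isLt) h)) hrange
  exact ⟨P, N, σ, hN, hP, rfl, hσ⟩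

end Decomposition

section Contraction

open ExteriorAlgebra

variable {n k : ℕ}

lemma contraction_row_of_pairs (v : ℕ → Vsp n) {q : ℕ} (hq : 2 * q ≤ k + 2)
    (hv : ∀ i j, i < j → j < k + 2 →
      OmegaForm n (v i) (v j) = if j = i + 1 ∧ i % 2 = 0 ∧ i < 2 * q then 1 else 0)
    (i : Fin (k + 2)) :
    (∑ j : Fin (k + 2), if hij : i < j then
        ((-1 : ℂ) ^ ((i : ℕ) + (j : ℕ) + 1) * OmegaForm n (v i) (v j)) •
          ιMulti ℂ k (omit2 (fun i : Fin (k + 2) => v i) i j hij) else 0) =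
      if (i : ℕ) % 2 = 0 ∧ (i : ℕ) < 2 * q then
        ιMulti ℂ k (fun w : Fin k => v (if (w : ℕ) < i then w else w + 2)) else 0 := by
  split_ifs with hi
  · rw [sum_eq_single ⟨i + 1, by omega⟩]
    · rw [dif_pos (Fin.mk_lt_mk.2 (Nat.lt_succ_self _)), hv _ _ (Nat.lt_succ_self _) (by omega),
        if_pos ⟨rfl, hi⟩, mul_one, Even.neg_one_pow ⟨i + 1, by ring⟩, one_smul]
      congr 1
      funext w
      rw [omit2_of_val_eq_succ _ _ rfl]
    · intro j _ hj
      split_ifs with hij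
      · rw [hv _ _ hij j.isLt, if_neg fun h => hj (Fin.ext h.1), mul_zero, zero_smul]
      · rfl
    · simp
  · refine sum_eq_zero fun j _ => ?_
    split_ifs with hij
    · rw [hv _ _ hij j.isLt, if_neg fun h => hi h.2, mul_zero, zero_smul]
    · rfl

def IsSymplecticContraction (n k : ℕ)
    (φ : (⋀[ℂ]^(k + 2) (Vsp n)) →ₗ[ℂ] (⋀[ℂ]^k (Vsp n))) : Prop :=
  ∀ (v : Fin (k + 2) → Vsp n) (x : ⋀[ℂ]^(k + 2) (Vsp n)),
    (x : ExteriorAlgebra ℂ (Vsp n)) = ιMulti ℂ (k + 2) v →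
    ((φ x : ⋀[ℂ]^k (Vsp n)) : ExteriorAlgebra ℂ (Vsp n)) =
      ∑ i : Fin (k + 2), ∑ j : Fin (k + 2),
        if hij : i < j then
          ((-1 : ℂ) ^ ((i : ℕ) + (j : ℕ) + 1) * OmegaForm n (v i) (v j)) •
            ιMulti ℂ k (omit2 v i j hij)
        else 0

namespace IsSymplecticContraction

variable {φ : (⋀[ℂ]^(k + 2) (Vsp n)) →ₗ[ℂ] (⋀[ℂ]^k (Vsp n))}
  (hφ : IsSymplecticContraction n k φ)
include hφ

lemma map_ιMulti_of_pairs (v : ℕ → Vsp n) {q : ℕ} (hq : 2 * q ≤ k + 2)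
    (hv : ∀ i j, i < j → j < k + 2 →
      OmegaForm n (v i) (v j) = if j = i + 1 ∧ i % 2 = 0 ∧ i < 2 * q then 1 else 0) :
    φ (exteriorPower.ιMulti ℂ (k + 2) fun i => v i) =
      ∑ t ∈ range q,
        exteriorPower.ιMulti ℂ k fun w => v (if (w : ℕ) < 2 * t then w else w + 2) := by
  apply Subtype.ext
  rw [hφ _ _ (exteriorPower.ιMulti_apply_coe _ _ _), Submodule.coe_sum]
  simp only [exteriorPower.ιMulti_apply_coe]
  rw [sum_congr rfl fun i _ => contraction_row_of_pairs v hq hv i,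
    Fin.sum_univ_eq_sum_range (fun i => if i % 2 = 0 ∧ i < 2 * q then
      ιMulti ℂ k (fun w : Fin k => v (if (w : ℕ) < i then w else w + 2)) else 0),
    sum_range_ite_even hq]

section DarbouxMonomial

variable [NeZero n]

lemma map_darbouxMonomial {P : Finset (Fin n)} {N : Finset (Fin (2 * n))}
    (hN : ∀ x ∈ N, x.rev ∉ N) (hP : P ⊆ freePairs N) (hlen : 2 * #P + #N = k + 2) :
    φ (darbouxMonomial P N (k + 2)) = ∑ a ∈ P, darbouxMonomial (P.erase a) N k := by
  rw [darbouxMonomial, hφ.map_ιMulti_of_pairs _ (q := #P) (by omega)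
    (fun i j hij hj => OmegaForm_darbouxWord hN hP hij (by omega)),
    sum_eq_sum_range_sortedNth (s := P)]
  refine sum_congr rfl fun t ht => ?_
  simp only [darbouxMonomial, darbouxWord_erase (mem_range.1 ht)]

lemma darbouxMonomial_mem_range (hk : k + 2 ≤ n) {P : Finset (Fin n)} {N : Finset (Fin (2 * n))}
    (hN : ∀ x ∈ N, x.rev ∉ N) (hP : P ⊆ freePairs N) (hlen : 2 * #P + #N = k) :
    darbouxMonomial P N k ∈ LinearMap.range φ := by
  rw [← Submodule.Quotient.mk_eq_zero]
  have hfree := card_sub_le_card_freePairs N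
  refine eq_zero_of_eraseSum_eq_zero (K := ℂ) (F := freePairs N)
    (z := fun Q => (LinearMap.range φ).mkQ (darbouxMonomial Q N k)) (by omega) ?_ hP rfl
  intro Q hQ hQcard
  show ∑ a ∈ Q, (LinearMap.range φ).mkQ (darbouxMonomial (Q.erase a) N k) = 0
  rw [← map_sum, ← hφ.map_darbouxMonomial hN hQ (by omega), Submodule.mkQ_apply,
    Submodule.Quotient.mk_eq_zero]
  exact LinearMap.mem_range_self φ _

lemma ιMulti_single_mem_range (hk : k + 2 ≤ n) (g : Fin k → Fin (2 * n)) :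
    exteriorPower.ιMulti ℂ k (fun i => (Pi.single (g i) 1 : Vsp n)) ∈ LinearMap.range φ := by
  by_cases hg : Function.Injective g
  · obtain ⟨P, N, σ, hN, hP, hlen, hgσ⟩ := exists_darbouxWord_comp_perm hg
    rw [show (fun i => (Pi.single (g i) 1 : Vsp n)) =
        (fun i : Fin k => (Pi.single (darbouxWord P N i) 1 : Vsp n)) ∘ σ by rw [hgσ]; rfl,
      AlternatingMap.map_perm]
    exact Submodule.smul_of_tower_mem _ _ (hφ.darbouxMonomial_mem_range hk hN hP hlen)
  · rw [AlternatingMap.map_eq_zero_of_not_injective _ (fun i => (Pi.single (g i) 1 : Vsp n))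
      fun h => hg (Function.Injective.of_comp (f := fun p => (Pi.single p 1 : Vsp n)) h)]
    exact Submodule.zero_mem _

lemma range_eq_top (hk : k + 2 ≤ n) : LinearMap.range φ = ⊤ := by
  rw [eq_top_iff, ← exteriorPower.ιMulti_span_of_span ℂ k (Vsp n) (Pi.basisFun ℂ _).span_eq,
    Submodule.span_le]
  rintro _ ⟨v, hv, rfl⟩
  obtain ⟨g, rfl⟩ := Set.range_subset_range_iff_exists_comp.1 hv
  simpa [Function.comp_def] using hφ.ιMulti_single_mem_range hk g

end DarbouxMonomial

end IsSymplecticContraction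

end Contraction

open ExteriorAlgebra in
/-- The dimension of the kernel of the symplectic contraction
`φ : Λ^{k+2}(ℂ^{2n}) → Λ^{k}(ℂ^{2n})` equals `C(2n, k+2) − C(2n, k)` for `k + 2 ≤ n`. -/
theorem symplectic_contraction_ker_finrank (n k : ℕ) (hk : k + 2 ≤ n)
    (φ : (⋀[ℂ]^(k + 2) (Vsp n)) →ₗ[ℂ] (⋀[ℂ]^k (Vsp n)))
    (hφ : ∀ (v : Fin (k + 2) → Vsp n) (x : ⋀[ℂ]^(k + 2) (Vsp n)),
        (x : ExteriorAlgebra ℂ (Vsp n)) = ιMulti ℂ (k + 2) v →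
        ((φ x : ⋀[ℂ]^k (Vsp n)) : ExteriorAlgebra ℂ (Vsp n)) =
          ∑ i : Fin (k + 2), ∑ j : Fin (k + 2),
            if hij : i < j then
              ((-1 : ℂ) ^ ((i : ℕ) + (j : ℕ) + 1) * OmegaForm n (v i) (v j)) •
                ιMulti ℂ k (omit2 v i j hij)
            else 0) :
    Module.finrank ℂ (LinearMap.ker φ) =
      Nat.choose (2 * n) (k + 2) - Nat.choose (2 * n) k := by
  have : NeZero n := ⟨by omega⟩
  have hrank := LinearMap.finrank_range_add_finrank_ker φ
  rw [IsSymplecticContraction.range_eq_top hφ hk, finrank_top, exteriorPower.finrank_eq,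
    exteriorPower.finrank_eq, Module.finrank_fin_fun] at hrank
  omega

end
end

section
/- A column indexed by subsets A = {p_1<...<p_s} and D = {q_1<...<q_t} of {1,...,n}, with I = A ∩ D = {i_1<...<i_r}, is semistandard symplectic (i.e. the complement {1,...,n}\(A∪D) contains at least one element > i_r, at least two elements > i_{r-1}, ..., at least r elements > i_1) if and only if there exists a subset J = {j_1<...<j_r} of {1,...,n}\(A∪D) with i_1 < j_1, i_2 < j_2, ..., i_r < j_r. -/
/-!
The `m`-th smallest element of a finite set `X` exceeds `t` iff at least `#X - m` elements of `X`
exceed `t`. So a set `J ⊆ C` dominating `I` forces the counting condition, and conversely the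
counting condition says exactly that the `#I` largest elements of `C` dominate `I`.
-/

/-- The increasing enumeration of a finite set of integers. -/
def fsort (X : Finset ℤ) : List ℤ := X.sort (· ≤ ·)

/-- The `m`-th smallest element of `X` (0-based; junk value `0` out of range). -/
def nthF (X : Finset ℤ) (m : ℕ) : ℤ := (fsort X).getD m 0

/-- `J` dominates `I` elementwise: `#J = #I` and `i_m < j_m` for all `m`. -/
def Dominates (I J : Finset ℤ) : Prop :=
  J.card = I.card ∧ ∀ m, m < I.card → nthF I m < nthF J m

/-- Lexicographic comparison of finite sets of integers via their increasing enumerations. -/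
def lexLE (X Y : Finset ℤ) : Prop := X = Y ∨ List.Lex (· < ·) (fsort X) (fsort Y)

open Finset

namespace Finset

variable {α : Type*} [LinearOrder α]

theorem lt_orderEmbOfFin_iff {s : Finset α} {k : ℕ} (h : #s = k) (i : Fin k) (t : α) :
    t < s.orderEmbOfFin h i ↔ k - i ≤ #{x ∈ s | t < x} := by
  set f := s.orderEmbOfFin h
  have hcard : #{x ∈ s | t < x} = #{j | t < f j} := by
    rw [← s.map_orderEmbOfFin_univ h, filter_map, card_map]
    rfl
  rw [hcard]
  constructor
  · intro ht
    rw [← Fin.card_Ici i]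
    refine card_le_card fun j hj => mem_filter.2 ⟨mem_univ j, ?_⟩
    exact ht.trans_le (f.monotone (mem_Ici.1 hj))
  · intro hle
    by_contra! hti
    have hsub : #{j | t < f j} ≤ #(Ioi i) :=
      card_le_card fun j hj => mem_Ioi.2 (f.lt_iff_lt.1 (hti.trans_lt (mem_filter.1 hj).2))
    rw [Fin.card_Ioi] at hsub
    omega

/-- `t` consists of the `r` largest elements of `s`. -/
theorem exists_subset_orderEmbOfFin_eq_top (s : Finset α) {r : ℕ} (hr : r ≤ #s) :
    ∃ t ⊆ s, ∃ h : #t = r, ∀ i : Fin r,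
      t.orderEmbOfFin h i = s.orderEmbOfFin rfl ⟨#s - r + i, by omega⟩ := by
  let g : Fin r → α := fun i => s.orderEmbOfFin rfl ⟨#s - r + i, by omega⟩
  have hg : StrictMono g := fun i j hij =>
    (s.orderEmbOfFin rfl).strictMono (Fin.mk_lt_mk.2 (by have := Fin.lt_def.1 hij; omega))
  have hcard : #(univ.image g) = r := by
    rw [card_image_of_injective _ hg.injective, card_univ, Fintype.card_fin]
  refine ⟨univ.image g, image_subset_iff.2 fun i _ => orderEmbOfFin_mem _ _ _, hcard, ?_⟩
  exact congrFun (orderEmbOfFin_unique hcard (fun i => mem_image_of_mem g (mem_univ i)) hg).symm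

end Finset

theorem nthF_eq_orderEmbOfFin (X : Finset ℤ) {k : ℕ} (h : #X = k) (i : Fin k) :
    nthF X i = X.orderEmbOfFin h i := by
  rw [nthF, fsort, orderEmbOfFin_apply, List.getD_eq_getElem _ _ (by simp [h]), Fin.getElem_fin]

theorem forall_card_filter_lt_iff_exists_dominates (I C : Finset ℤ) :
    (∀ m, m < #I → #I - m ≤ #{c ∈ C | nthF I m < c}) ↔ ∃ J ⊆ C, Dominates I J := by
  constructor
  · intro h
    obtain hr | hr := Nat.eq_zero_or_pos #I
    · exact ⟨∅, empty_subset C, by simp [Dominates, hr]⟩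
    have hIC : #I ≤ #C := by simpa using (h 0 hr).trans (card_filter_le _ _)
    obtain ⟨J, hJC, hJ, hJtop⟩ := C.exists_subset_orderEmbOfFin_eq_top hIC
    refine ⟨J, hJC, hJ, fun m hm => ?_⟩
    rw [nthF_eq_orderEmbOfFin J hJ ⟨m, hm⟩, hJtop, lt_orderEmbOfFin_iff]
    have := h m hm
    dsimp only
    omega
  · rintro ⟨J, hJC, hJ, hdom⟩ m hm
    have hlt := hdom m hm
    rw [nthF_eq_orderEmbOfFin J hJ ⟨m, hm⟩, lt_orderEmbOfFin_iff] at hlt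
    exact hlt.trans (card_le_card (filter_subset_filter _ hJC))

theorem semistandard_column_iff_general (n : ℕ) (A D : Finset ℤ) :
    (∀ m, m < (A ∩ D).card →
        (A ∩ D).card - m ≤
          ((Finset.Icc 1 (n : ℤ) \ (A ∪ D)).filter (fun c => nthF (A ∩ D) m < c)).card) ↔
      ∃ J ⊆ Finset.Icc 1 (n : ℤ) \ (A ∪ D), Dominates (A ∩ D) J :=
  forall_card_filter_lt_iff_exists_dominates (A ∩ D) (Finset.Icc 1 (n : ℤ) \ (A ∪ D))

/-- Let `A, D ⊆ {1,…,n}` with `#A + #D ≤ n` and `I = A ∩ D = {i_1 < … < i_r}`.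
The column is semistandard symplectic — i.e. for each `m`, the complement
`{1,…,n} \ (A ∪ D)` contains at least `r + 1 - m` elements `> i_m` (0-based: at least `r - m`
elements greater than the `m`-th smallest element of `I`) — if and only if there exists
`J = {j_1 < … < j_r} ⊆ {1,…,n} \ (A ∪ D)` with `i_1 < j_1, …, i_r < j_r`. -/
theorem semistandard_column_iff (n : ℕ) (A D : Finset ℤ)
    (hA : A ⊆ Finset.Icc 1 (n : ℤ)) (hD : D ⊆ Finset.Icc 1 (n : ℤ))
    (hc : A.card + D.card ≤ n) :
    (∀ m, m < (A ∩ D).card →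
        (A ∩ D).card - m ≤
          ((Finset.Icc 1 (n : ℤ) \ (A ∪ D)).filter (fun c => nthF (A ∩ D) m < c)).card) ↔
      ∃ J ⊆ Finset.Icc 1 (n : ℤ) \ (A ∪ D), Dominates (A ∩ D) J :=
  semistandard_column_iff_general n A D
end

section
/- For a semistandard symplectic column f(A,D) with I = A∩D, let J be the lexicographically smallest subset {j_1<...<j_r} of {1,...,n}\(A∪D) with #J = #I and i_k < j_k for all k, and set B = (A\I)∪J, C = (D\I)∪J. Then J = B ∩ C, and I is the largest subset {i_1<...<i_r} of Z\(B∪C) (for the lexicographic order) with i_k < j_k for all k; in particular the map (A,D) ↦ (B,C) is injective, i.e. one can recover (A,D) from (B,C). -/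
/-!
Counting replaces indexing: `nthF X m < t` iff more than `m` elements of `X` lie below `t`, so
"`Y` dominates `I`" becomes `#{y ∈ Y | y ≤ t} ≤ #{x ∈ I | x < t}` for all `t`, and for sets of the
same size the lexicographic order is decided by the least element of the symmetric difference.

`J = B ∩ C` because `A \ I` and `D \ I` are disjoint, and then `A = (B \ J) ∪ I`,
`D = (C \ J) ∪ I`, so everything hinges on recovering `I` from `(B, C)`. If some `I'` avoiding
`B ∪ C` and dominated by `J` were lexicographically larger than `I`, the least element `s` of
`I' \ I`, at position `k` of `I'`, would satisfy `i_k < s < j_k`; as `s` avoids `A`, `D` and `J`,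
replacing `j_k` by `s` in `J` would give a smaller admissible choice of `J`.
-/

open Finset

lemma nthF_eq_orderEmbOfFin_s5 {X : Finset ℤ} {m : ℕ} (hm : m < #X) :
    nthF X m = X.orderEmbOfFin rfl ⟨m, hm⟩ := by
  rw [nthF, List.getD_eq_getElem _ _ (by rwa [fsort, length_sort])]
  rfl

lemma nthF_mem {X : Finset ℤ} {m : ℕ} (hm : m < #X) : nthF X m ∈ X := by
  rw [nthF_eq_orderEmbOfFin_s5 hm]; exact orderEmbOfFin_mem _ _ _

lemma exists_nthF_eq {X : Finset ℤ} {x : ℤ} (hx : x ∈ X) : ∃ m < #X, nthF X m = x := by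
  rw [← mem_coe, ← range_orderEmbOfFin X rfl] at hx
  obtain ⟨⟨m, hm⟩, rfl⟩ := hx
  exact ⟨m, hm, nthF_eq_orderEmbOfFin_s5 hm⟩

lemma card_filter_lt_nthF {X : Finset ℤ} {m : ℕ} (hm : m < #X) :
    #{x ∈ X | x < nthF X m} = m := by
  set e := X.orderEmbOfFin rfl
  calc #{x ∈ X | x < nthF X m} = #{x ∈ univ.image e | x < e ⟨m, hm⟩} := by
        rw [image_orderEmbOfFin_univ, nthF_eq_orderEmbOfFin_s5 hm]
    _ = m := by
        rw [filter_image, card_image_of_injective _ e.injective]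
        simp [filter_gt_eq_Iio]

lemma nthF_lt_iff {X : Finset ℤ} {m : ℕ} (hm : m < #X) (t : ℤ) :
    nthF X m < t ↔ m < #{x ∈ X | x < t} := by
  constructor
  · intro h
    have hsub : {x ∈ X | x < nthF X m} ⊂ {x ∈ X | x < t} := by
      refine (ssubset_iff_of_subset ?_).2 ⟨nthF X m, by simp [nthF_mem hm, h]⟩
      exact monotone_filter_right X fun x _ hx => hx.trans h
    simpa [card_filter_lt_nthF hm] using card_lt_card hsub
  · intro h
    by_contra! ht
    have := card_le_card (monotone_filter_right X fun x _ (hx : x < t) => hx.trans_le ht)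
    rw [card_filter_lt_nthF hm] at this
    omega

lemma nthF_le_iff {X : Finset ℤ} {m : ℕ} (hm : m < #X) (t : ℤ) :
    nthF X m ≤ t ↔ m < #{x ∈ X | x ≤ t} := by
  simp only [← Int.lt_add_one_iff, nthF_lt_iff hm]

lemma dominates_iff_card_filter {I Y : Finset ℤ} :
    Dominates I Y ↔ #Y = #I ∧ ∀ t, #{y ∈ Y | y ≤ t} ≤ #{x ∈ I | x < t} := by
  refine and_congr_right fun hcard => ⟨fun h t => ?_, fun h m hm => ?_⟩
  · set c := #{y ∈ Y | y ≤ t}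
    have hc : c ≤ #Y := card_filter_le _ _
    rcases Nat.eq_zero_or_pos c with hc0 | hc0
    · omega
    have hY : nthF Y (c - 1) ≤ t := (nthF_le_iff (by omega) t).2 (by omega)
    have hI := (nthF_lt_iff (X := I) (m := c - 1) (by omega) t).1 ((h _ (by omega)).trans_le hY)
    omega
  · have hY := (nthF_le_iff (hcard ▸ hm) _).1 (le_refl (nthF Y m))
    exact (nthF_lt_iff hm _).2 (hY.trans_le (h _))

lemma List.exists_mem_notMem_of_lex {α : Type*} [LinearOrder α] {l₁ l₂ : List α}
    (h : List.Lex (· < ·) l₁ l₂) (h₁ : l₁.Pairwise (· < ·)) (h₂ : l₂.Pairwise (· < ·))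
    (hlen : l₁.length = l₂.length) :
    ∃ x ∈ l₁, x ∉ l₂ ∧ ∀ z < x, z ∈ l₁ ↔ z ∈ l₂ := by
  induction h with
  | nil => simp at hlen
  | @cons a l₁ l₂ _ ih =>
    rw [List.pairwise_cons] at h₁ h₂
    obtain ⟨x, hx, hx₂, hagree⟩ := ih h₁.2 h₂.2 (by simpa using hlen)
    have hax : a < x := h₁.1 x hx
    refine ⟨x, .tail _ hx, by simp [hax.ne', hx₂], fun z hz => ?_⟩
    simp [hagree z hz]
  | @rel a l₁ b l₂ hab =>
    rw [List.pairwise_cons] at h₁ h₂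
    refine ⟨a, .head _, ?_, fun z hz => ?_⟩
    · simp only [List.mem_cons, not_or]
      exact ⟨hab.ne, fun ha => (hab.trans (h₂.1 a ha)).false⟩
    · simp only [List.mem_cons]
      exact iff_of_false (by grind) (by grind)

lemma fsort_injective : Function.Injective fsort := fun X Y h => by
  ext z; simpa [fsort] using congrArg (z ∈ ·) h

lemma exists_mem_sdiff_of_lex {X Y : Finset ℤ} (hcard : #X = #Y)
    (h : List.Lex (· < ·) (fsort X) (fsort Y)) :
    ∃ x ∈ X, x ∉ Y ∧ ∀ z < x, z ∈ X ↔ z ∈ Y := by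
  simpa only [fsort, mem_sort] using List.exists_mem_notMem_of_lex h
    (sortedLT_sort X).pairwise (sortedLT_sort Y).pairwise (by simp [fsort, hcard])

lemma lexLE_or_lex (X Y : Finset ℤ) : lexLE X Y ∨ List.Lex (· < ·) (fsort Y) (fsort X) := by
  rcases trichotomous_of (List.Lex (· < ·)) (fsort X) (fsort Y) with h | h | h
  · exact .inl (.inr h)
  · exact .inl (.inl (fsort_injective h))
  · exact .inr h

lemma not_lexLE_of_lex {X Y : Finset ℤ} (h : List.Lex (· < ·) (fsort Y) (fsort X)) :
    ¬ lexLE X Y := by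
  rintro (rfl | h')
  · exact irrefl _ h
  · exact asymm h h'

lemma lexLE_antisymm {X Y : Finset ℤ} (h₁ : lexLE X Y) (h₂ : lexLE Y X) : X = Y := by
  rcases h₁ with h₁ | h₁
  · exact h₁
  · exact absurd h₂ (not_lexLE_of_lex h₁)

lemma lex_of_mem_sdiff {X Y : Finset ℤ} (hcard : #X = #Y) {x : ℤ} (hxX : x ∈ X) (hxY : x ∉ Y)
    (hagree : ∀ z < x, z ∈ X ↔ z ∈ Y) : List.Lex (· < ·) (fsort X) (fsort Y) := by
  rcases lexLE_or_lex Y X with (rfl | h) | h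
  · exact absurd hxX hxY
  · obtain ⟨y, hyY, hyX, hagree'⟩ := exists_mem_sdiff_of_lex hcard.symm h
    rcases lt_trichotomy x y with hxy | rfl | hxy
    · exact absurd ((hagree' x hxy).2 hxX) hxY
    · exact absurd hxX hyX
    · exact absurd ((hagree y hxy).2 hyY) hyX
  · exact h

lemma card_insert_erase {Y : Finset ℤ} {y s : ℤ} (hy : y ∈ Y) (hs : s ∉ Y) :
    #(insert s (Y.erase y)) = #Y := by
  rw [card_insert_of_notMem (fun h => hs (mem_of_mem_erase h)), card_erase_add_one hy]

lemma lex_insert_erase {Y : Finset ℤ} {y s : ℤ} (hy : y ∈ Y) (hs : s ∉ Y) (hsy : s < y) :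
    List.Lex (· < ·) (fsort (insert s (Y.erase y))) (fsort Y) := by
  refine lex_of_mem_sdiff (card_insert_erase hy hs) (mem_insert_self _ _) hs fun z hz => ?_
  simp [hz.ne, (hz.trans hsy).ne]

lemma Dominates.insert_erase {I Y : Finset ℤ} (hdom : Dominates I Y) {k : ℕ} (hk : k < #I)
    {s : ℤ} (hs : s ∉ Y) (hIs : nthF I k < s) (hsY : s < nthF Y k) :
    Dominates I (insert s (Y.erase (nthF Y k))) := by
  rw [dominates_iff_card_filter] at hdom ⊢
  have hkY : k < #Y := hdom.1 ▸ hk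
  have hy := nthF_mem hkY
  refine ⟨(card_insert_erase hy hs).trans hdom.1, fun t => ?_⟩
  have hcount : #{z ∈ insert s (Y.erase (nthF Y k)) | z ≤ t} + (if nthF Y k ≤ t then 1 else 0)
      = #{z ∈ Y | z ≤ t} + (if s ≤ t then 1 else 0) := by
    rw [filter_insert, filter_erase]
    split_ifs <;> grind [card_insert_of_notMem, card_erase_add_one, erase_eq_of_notMem]
  have := hdom.2 t
  -- the new set has more elements `≤ t` than `Y` only when `s ≤ t < y_k`, where `i_k < s` helps
  by_cases hst : s ≤ t ∧ t < nthF Y k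
  · have hY : #{z ∈ Y | z ≤ t} ≤ k := not_lt.1 fun h => hst.2.not_ge ((nthF_le_iff hkY t).2 h)
    have hI : k < #{x ∈ I | x < t} := (nthF_lt_iff hk t).1 (hIs.trans_le hst.1)
    grind
  · grind

lemma exists_nthF_notMem_of_lex {I I' : Finset ℤ} (hcard : #I = #I')
    (h : List.Lex (· < ·) (fsort I) (fsort I')) :
    ∃ k < #I', nthF I' k ∉ I ∧ nthF I k < nthF I' k := by
  obtain ⟨x, hxI, hxI', hagree⟩ := exists_mem_sdiff_of_lex hcard h
  have hne : (I' \ I).Nonempty := sdiff_nonempty.2 fun hsub =>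
    hxI' ((eq_of_subset_of_card_le hsub hcard.le) ▸ hxI)
  obtain ⟨hsI', hsI⟩ := mem_sdiff.1 ((I' \ I).min'_mem hne)
  set s := (I' \ I).min' hne
  have hxs : x < s := lt_of_le_of_ne (not_lt.1 fun hsx => hsI ((hagree s hsx).2 hsI'))
    (ne_of_mem_of_not_mem hsI' hxI').symm
  obtain ⟨k, hk, hks⟩ := exists_nthF_eq hsI'
  refine ⟨k, hk, hks ▸ hsI, ?_⟩
  -- below `s`, `I'` lies inside `I` by minimality of `s`, and `I` has the extra element `x`
  have hsub : {z ∈ I' | z < s} ⊂ {z ∈ I | z < s} := by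
    refine (ssubset_iff_of_subset fun z hz => ?_).2 ⟨x, by simp [hxI, hxI', hxs]⟩
    obtain ⟨hzI', hzs⟩ := mem_filter.1 hz
    by_contra hzI
    exact (min'_le _ z (mem_sdiff.2 ⟨hzI', fun h => hzI (mem_filter.2 ⟨h, hzs⟩)⟩)).not_gt hzs
  rw [hks, nthF_lt_iff (hcard ▸ hk)]
  calc k = #{z ∈ I' | z < s} := by rw [← hks, card_filter_lt_nthF hk]
    _ < _ := card_lt_card hsub

lemma lexLE_inter_of_lexMin {a b : ℤ} {A D J I' : Finset ℤ} (hA : A ⊆ Icc a b)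
    (hJsub : J ⊆ Icc a b \ (A ∪ D)) (hJdom : Dominates (A ∩ D) J)
    (hJmin : ∀ J', J' ⊆ Icc a b \ (A ∪ D) → Dominates (A ∩ D) J' → lexLE J J')
    (hI' : ∀ x ∈ I', x ∉ ((A \ (A ∩ D)) ∪ J) ∪ ((D \ (A ∩ D)) ∪ J))
    (hI'dom : Dominates I' J) : lexLE I' (A ∩ D) := by
  refine (lexLE_or_lex I' (A ∩ D)).resolve_right fun hlt => ?_
  obtain ⟨k, hk, hsI, hIs⟩ := exists_nthF_notMem_of_lex (hJdom.1.symm.trans hI'dom.1) hlt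
  set s := nthF I' k
  have hsJ : s < nthF J k := hI'dom.2 k hk
  have hkJ : k < #J := hI'dom.1 ▸ hk
  have hkI : k < #(A ∩ D) := hJdom.1 ▸ hkJ
  have hsBC := hI' s (nthF_mem hk)
  have hsJ' : s ∉ J := by grind
  have hsAD : s ∉ A ∪ D := by grind
  have hsIcc : s ∈ Icc a b := by
    have haI := mem_Icc.1 (hA (mem_inter.1 (nthF_mem hkI)).1)
    have hJb := mem_Icc.1 (mem_sdiff.1 (hJsub (nthF_mem hkJ))).1
    exact mem_Icc.2 ⟨by omega, by omega⟩
  have hJ'sub : insert s (J.erase (nthF J k)) ⊆ Icc a b \ (A ∪ D) :=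
    insert_subset (mem_sdiff.2 ⟨hsIcc, hsAD⟩) ((erase_subset _ _).trans hJsub)
  exact not_lexLE_of_lex (lex_insert_erase (nthF_mem hkJ) hsJ' hsJ)
    (hJmin _ hJ'sub (hJdom.insert_erase hkI hsJ' hIs hsJ))

lemma sdiff_inter_union_inter_sdiff_inter_union {α : Type*} [DecidableEq α] (A D J : Finset α) :
    (A \ (A ∩ D) ∪ J) ∩ (D \ (A ∩ D) ∪ J) = J := by
  ext x; simp only [mem_inter, mem_union, mem_sdiff]; tauto

lemma notMem_sdiff_inter_union_of_mem_inter {α : Type*} [DecidableEq α] {A D J : Finset α}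
    (hJ : Disjoint (A ∪ D) J) : ∀ x ∈ A ∩ D, x ∉ (A \ (A ∩ D) ∪ J) ∪ (D \ (A ∩ D) ∪ J) := by
  intro x hx
  have hxJ : x ∉ J := disjoint_left.1 hJ (mem_union_left _ (mem_inter.1 hx).1)
  simp [mem_inter.1 hx, hxJ]

lemma sdiff_union_sdiff_union {α : Type*} [DecidableEq α] {A I J : Finset α} (hI : I ⊆ A)
    (hJ : Disjoint A J) : (A \ I ∪ J) \ J ∪ I = A := by
  rw [union_sdiff_cancel_right (disjoint_of_subset_left sdiff_subset hJ), sdiff_union_of_subset hI]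

theorem double_column_injective_general (n : ℕ) (A D : Finset ℤ)
    (hA : A ⊆ Finset.Icc 1 (n : ℤ))
    (J : Finset ℤ) (hJsub : J ⊆ Finset.Icc 1 (n : ℤ) \ (A ∪ D))
    (hJdom : Dominates (A ∩ D) J)
    (hJmin : ∀ J', J' ⊆ Finset.Icc 1 (n : ℤ) \ (A ∪ D) → Dominates (A ∩ D) J' → lexLE J J') :
    (J = ((A \ (A ∩ D)) ∪ J) ∩ ((D \ (A ∩ D)) ∪ J)) ∧
    (∀ I' : Finset ℤ,
        (∀ x ∈ I', x ∉ ((A \ (A ∩ D)) ∪ J) ∪ ((D \ (A ∩ D)) ∪ J)) →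
        I'.card = J.card → (∀ m, m < J.card → nthF I' m < nthF J m) →
        lexLE I' (A ∩ D)) ∧
    (∀ A₂ D₂ J₂ : Finset ℤ,
        A₂ ⊆ Finset.Icc 1 (n : ℤ) → D₂ ⊆ Finset.Icc 1 (n : ℤ) → A₂.card + D₂.card ≤ n →
        J₂ ⊆ Finset.Icc 1 (n : ℤ) \ (A₂ ∪ D₂) → Dominates (A₂ ∩ D₂) J₂ →
        (∀ J', J' ⊆ Finset.Icc 1 (n : ℤ) \ (A₂ ∪ D₂) → Dominates (A₂ ∩ D₂) J' →
          lexLE J₂ J') →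
        (A₂ \ (A₂ ∩ D₂)) ∪ J₂ = (A \ (A ∩ D)) ∪ J →
        (D₂ \ (A₂ ∩ D₂)) ∪ J₂ = (D \ (A ∩ D)) ∪ J →
        A₂ = A ∧ D₂ = D) := by
  refine ⟨(sdiff_inter_union_inter_sdiff_inter_union A D J).symm,
    fun I' hI' hcard hlt => lexLE_inter_of_lexMin hA hJsub hJdom hJmin hI' ⟨hcard.symm, hcard ▸ hlt⟩,
    fun A₂ D₂ J₂ hA₂ _ _ hJ₂sub hJ₂dom hJ₂min hB hC => ?_⟩
  obtain rfl : J = J₂ := by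
    rw [← sdiff_inter_union_inter_sdiff_inter_union A D J, ← hB, ← hC,
      sdiff_inter_union_inter_sdiff_inter_union]
  have hJ : Disjoint (A ∪ D) J := disjoint_of_subset_right hJsub disjoint_sdiff
  have hJ₂ : Disjoint (A₂ ∪ D₂) J := disjoint_of_subset_right hJ₂sub disjoint_sdiff
  have hI : A₂ ∩ D₂ = A ∩ D := by
    refine lexLE_antisymm (lexLE_inter_of_lexMin hA hJsub hJdom hJmin ?_ hJ₂dom)
      (lexLE_inter_of_lexMin hA₂ hJ₂sub hJ₂dom hJ₂min ?_ hJdom)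
    · rw [← hB, ← hC]; exact notMem_sdiff_inter_union_of_mem_inter hJ₂
    · rw [hB, hC]; exact notMem_sdiff_inter_union_of_mem_inter hJ
  constructor
  · rw [← sdiff_union_sdiff_union inter_subset_left (hJ₂.mono_left subset_union_left), hB, hI,
      sdiff_union_sdiff_union inter_subset_left (hJ.mono_left subset_union_left)]
  · rw [← sdiff_union_sdiff_union inter_subset_right (hJ₂.mono_left subset_union_right), hC, hI,
      sdiff_union_sdiff_union inter_subset_right (hJ.mono_left subset_union_right)]

/-- Let `f(A,D)` be a semistandard symplectic column (`A, D ⊆ {1,…,n}`,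
`#A + #D ≤ n`), `I = A ∩ D`, and let `J` be the lexicographically smallest subset of
`{1,…,n} \ (A ∪ D)` with `#J = #I` dominating `I` elementwise.  Set `B = (A\I) ∪ J` and
`C = (D\I) ∪ J`.  Then `J = B ∩ C`; `I` is the (lexicographically) largest subset of
`ℤ \ (B ∪ C)` of cardinality `#J` dominated elementwise by `J`; and the pair `(A, D)` can be
recovered from `(B, C)` — the assignment `(A,D) ↦ (B,C)` is injective. -/
theorem double_column_injective (n : ℕ) (A D : Finset ℤ)
    (hA : A ⊆ Finset.Icc 1 (n : ℤ)) (hD : D ⊆ Finset.Icc 1 (n : ℤ))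
    (hc : A.card + D.card ≤ n)
    (J : Finset ℤ) (hJsub : J ⊆ Finset.Icc 1 (n : ℤ) \ (A ∪ D))
    (hJdom : Dominates (A ∩ D) J)
    (hJmin : ∀ J', J' ⊆ Finset.Icc 1 (n : ℤ) \ (A ∪ D) → Dominates (A ∩ D) J' → lexLE J J') :
    (J = ((A \ (A ∩ D)) ∪ J) ∩ ((D \ (A ∩ D)) ∪ J)) ∧
    (∀ I' : Finset ℤ,
        (∀ x ∈ I', x ∉ ((A \ (A ∩ D)) ∪ J) ∪ ((D \ (A ∩ D)) ∪ J)) →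
        I'.card = J.card → (∀ m, m < J.card → nthF I' m < nthF J m) →
        lexLE I' (A ∩ D)) ∧
    (∀ A₂ D₂ J₂ : Finset ℤ,
        A₂ ⊆ Finset.Icc 1 (n : ℤ) → D₂ ⊆ Finset.Icc 1 (n : ℤ) → A₂.card + D₂.card ≤ n →
        J₂ ⊆ Finset.Icc 1 (n : ℤ) \ (A₂ ∪ D₂) → Dominates (A₂ ∩ D₂) J₂ →
        (∀ J', J' ⊆ Finset.Icc 1 (n : ℤ) \ (A₂ ∪ D₂) → Dominates (A₂ ∩ D₂) J' →
          lexLE J₂ J') →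
        (A₂ \ (A₂ ∩ D₂)) ∪ J₂ = (A \ (A ∩ D)) ∪ J →
        (D₂ \ (A₂ ∩ D₂)) ∪ J₂ = (D \ (A ∩ D)) ∪ J →
        A₂ = A ∧ D₂ = D) :=
  double_column_injective_general n A D hA J hJsub hJdom hJmin
end
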